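/- arXiv:2512.14886 — 2 statements merged into one kernel-verified Lean document; each statement's English description precedes it below -/
import Mathlib

section
/- Let Ĝ be a chordal signed separable bigraph and suppose a vertex set S minimally separates non-trivial components Ĥ_1 and Ĥ_2 of Ĝ − S. Then Ĥ_1 or Ĥ_2 contains an edge that is a signed simplicial edge of Ĝ. -/
universe u

/-! ## Basic unsigned notions for bipartite graphs -/

/-- `G` has an induced cycle of length at least 6 (signs, if any, are arbitrary). -/
def HasLongInducedCycle {V : Type u} (G : SimpleGraph V) : Prop :=
  ∃ n : ℕ, 6 ≤ n ∧ ∃ f : ZMod n → V, Function.Injective f ∧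
    ∀ i j : ZMod n, G.Adj (f i) (f j) ↔ (j = i + 1 ∨ i = j + 1)

/-- A graph is separable if it contains an induced `2K₂`. -/
def IsSeparableGraph {V : Type u} (G : SimpleGraph V) : Prop :=
  ∃ a b c d : V, [a, b, c, d].Pairwise (· ≠ ·) ∧
    G.Adj a b ∧ G.Adj c d ∧ ¬ G.Adj a c ∧ ¬ G.Adj a d ∧ ¬ G.Adj b c ∧ ¬ G.Adj b d

/-- An edge `ab` of a bipartite graph is simplicial if every vertex of `N(a) - {b}`
is adjacent to every vertex of `N(b) - {a}`. -/
def SimplicialEdge {V : Type u} (G : SimpleGraph V) (a b : V) : Prop :=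
  G.Adj a b ∧ ∀ c ∈ G.neighborSet a \ {b}, ∀ d ∈ G.neighborSet b \ {a}, G.Adj c d

/-- A canonical ordering of a bigraph with bipartition given by `side`
(`X` is the `side = true` part, `Y` the `side = false` part): the neighbourhoods of
the `x`'s are decreasing and those of the `y`'s are increasing. -/
def IsCanonicalOrdering {V : Type u} (G : SimpleGraph V) (side : V → Bool)
    {α β : ℕ} (x : Fin α → V) (y : Fin β → V) : Prop :=
  Function.Injective x ∧ Function.Injective y ∧
  (∀ w : V, side w = true ↔ w ∈ Set.range x) ∧
  (∀ w : V, side w = false ↔ w ∈ Set.range y) ∧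
  (∀ i j : Fin α, i ≤ j → G.neighborSet (x j) ⊆ G.neighborSet (x i)) ∧
  (∀ i j : Fin β, i ≤ j → G.neighborSet (y i) ⊆ G.neighborSet (y j))

/-- `H` is a non-trivial (i.e. containing at least one edge) connected component
of `G - S`. -/
def IsNontrivialComponentOf {V : Type u} (G : SimpleGraph V) (S H : Set V) : Prop :=
  H ⊆ Sᶜ ∧ (G.induce H).Connected ∧
  (∀ a ∈ H, ∀ b ∈ Sᶜ, G.Adj a b → b ∈ H) ∧
  (∃ a ∈ H, ∃ b ∈ H, G.Adj a b)

/-- `S` minimally separates the non-trivial components `H` and `H'` of `G - S`: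
every vertex of `S` has a neighbour in `H` and a neighbour in `H'`. -/
def MinimallySeparates {V : Type u} (G : SimpleGraph V) (S H H' : Set V) : Prop :=
  IsNontrivialComponentOf G S H ∧ IsNontrivialComponentOf G S H' ∧ H ≠ H' ∧
  ∀ s ∈ S, (∃ a ∈ H, G.Adj s a) ∧ (∃ a ∈ H', G.Adj s a)

/-! ## Signed bigraphs -/

/-- A signed bigraph: a bipartite graph (with bipartition recorded by `side`)
whose edges carry a sign (`true` = positive, `false` = negative). -/
structure SignedBigraph (V : Type u) where
  graph : SimpleGraph V
  sign : V → V → Bool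
  sign_symm : ∀ a b : V, sign a b = sign b a
  side : V → Bool
  bipartite : ∀ ⦃a b : V⦄, graph.Adj a b → side a ≠ side b

namespace SignedBigraph

variable {V : Type u}

def Adj (G : SignedBigraph V) (a b : V) : Prop := G.graph.Adj a b

/-- `N(ab) = (N(a) ∪ N(b)) - {a, b}`. -/
def edgeNbhd (G : SignedBigraph V) (a b : V) : Set V :=
  (G.graph.neighborSet a ∪ G.graph.neighborSet b) \ {a, b}

/-- The edge `ab` is signed simplicial: `N(ab)` induces a positive biclique. -/
def SignedSimplicial (G : SignedBigraph V) (a b : V) : Prop :=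
  G.Adj a b ∧
    ∀ c ∈ G.edgeNbhd a b, ∀ d ∈ G.edgeNbhd a b,
      G.side c ≠ G.side d → (G.Adj c d ∧ G.sign c d = true)

/-- Delete a set of edges from a signed bigraph (keeping all vertices). -/
def deleteEdges (G : SignedBigraph V) (s : Set (Sym2 V)) : SignedBigraph V where
  graph := G.graph.deleteEdges s
  sign := G.sign
  sign_symm := G.sign_symm
  side := G.side
  bipartite := by
    intro a b h
    exact G.bipartite (SimpleGraph.deleteEdges_adj.mp h).1

/-- The induced signed subgraph on a set of vertices. -/
def induce (G : SignedBigraph V) (A : Set V) : SignedBigraph A where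
  graph := G.graph.induce A
  sign a b := G.sign a b
  sign_symm a b := G.sign_symm a b
  side a := G.side a
  bipartite := by
    intro a b h
    exact G.bipartite h

/-- A chordal signed bigraph: the edges can be ordered `e₁, …, e_m` so that each `eᵢ`
is a signed simplicial edge of the signed bigraph obtained by deleting `e₁, …, e_{i-1}`. -/
def IsChordal (G : SignedBigraph V) : Prop :=
  ∃ l : List (Sym2 V), l.Nodup ∧ (∀ e, e ∈ G.graph.edgeSet ↔ e ∈ l) ∧
    ∀ (i : ℕ) (h : i < l.length), ∃ a b : V,
      l.get ⟨i, h⟩ = s(a, b) ∧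
      (G.deleteEdges {e | e ∈ l.take i}).SignedSimplicial a b

/-! ## Forbidden patterns F₁ – F₆, D, long cycles -/

/-- `G` contains the all-negative 4-cycle `F₁` as an induced subgraph. -/
def HasF1 (G : SignedBigraph V) : Prop :=
  ∃ u1 u2 v1 v2 : V,
    [u1, u2, v1, v2].Pairwise (· ≠ ·) ∧
    G.Adj u1 v1 ∧ G.Adj u1 v2 ∧ G.Adj u2 v1 ∧ G.Adj u2 v2 ∧
    ¬ G.Adj u1 u2 ∧ ¬ G.Adj v1 v2 ∧
    G.sign u1 v1 = false ∧ G.sign u1 v2 = false ∧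
    G.sign u2 v1 = false ∧ G.sign u2 v2 = false

/-- `G` contains a member of `F₂` (a signed `K_{2,3}`) as an induced subgraph. -/
def HasF2 (G : SignedBigraph V) : Prop :=
  ∃ u1 u2 v1 v2 v3 : V,
    [u1, u2, v1, v2, v3].Pairwise (· ≠ ·) ∧
    G.Adj u1 v1 ∧ G.Adj u1 v2 ∧ G.Adj u1 v3 ∧
    G.Adj u2 v1 ∧ G.Adj u2 v2 ∧ G.Adj u2 v3 ∧
    ¬ G.Adj u1 u2 ∧ ¬ G.Adj v1 v2 ∧ ¬ G.Adj v1 v3 ∧ ¬ G.Adj v2 v3 ∧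
    G.sign u1 v1 = false ∧ G.sign u1 v2 = false ∧
    G.sign u2 v2 = false ∧ G.sign u2 v3 = false

/-- `G` contains a member of `F₃` (a signed `K_{2,4}`) as an induced subgraph. -/
def HasF3 (G : SignedBigraph V) : Prop :=
  ∃ u1 u2 v1 v2 v3 v4 : V,
    [u1, u2, v1, v2, v3, v4].Pairwise (· ≠ ·) ∧
    G.Adj u1 v1 ∧ G.Adj u1 v2 ∧ G.Adj u1 v3 ∧ G.Adj u1 v4 ∧
    G.Adj u2 v1 ∧ G.Adj u2 v2 ∧ G.Adj u2 v3 ∧ G.Adj u2 v4 ∧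
    ¬ G.Adj u1 u2 ∧ ¬ G.Adj v1 v2 ∧ ¬ G.Adj v1 v3 ∧ ¬ G.Adj v1 v4 ∧
    ¬ G.Adj v2 v3 ∧ ¬ G.Adj v2 v4 ∧ ¬ G.Adj v3 v4 ∧
    G.sign u1 v1 = false ∧ G.sign u1 v2 = false ∧
    G.sign u2 v3 = false ∧ G.sign u2 v4 = false

/-- `G` contains a member of `F₄` (a signed `K_{3,3}` with negative perfect matching)
as an induced subgraph. -/
def HasF4 (G : SignedBigraph V) : Prop :=
  ∃ u1 u2 u3 v1 v2 v3 : V,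
    [u1, u2, u3, v1, v2, v3].Pairwise (· ≠ ·) ∧
    G.Adj u1 v1 ∧ G.Adj u1 v2 ∧ G.Adj u1 v3 ∧
    G.Adj u2 v1 ∧ G.Adj u2 v2 ∧ G.Adj u2 v3 ∧
    G.Adj u3 v1 ∧ G.Adj u3 v2 ∧ G.Adj u3 v3 ∧
    ¬ G.Adj u1 u2 ∧ ¬ G.Adj u1 u3 ∧ ¬ G.Adj u2 u3 ∧
    ¬ G.Adj v1 v2 ∧ ¬ G.Adj v1 v3 ∧ ¬ G.Adj v2 v3 ∧
    G.sign u1 v1 = false ∧ G.sign u2 v2 = false ∧ G.sign u3 v3 = false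

/-- `G` contains a member of `F₅` as an induced subgraph. -/
def HasF5 (G : SignedBigraph V) : Prop :=
  ∃ x1 x2 x3 y1 y2 y3 : V,
    [x1, x2, x3, y1, y2, y3].Pairwise (· ≠ ·) ∧
    G.Adj x1 y1 ∧ G.Adj x1 y2 ∧ ¬ G.Adj x1 y3 ∧
    G.Adj x2 y1 ∧ G.Adj x2 y2 ∧ G.Adj x2 y3 ∧
    G.Adj x3 y1 ∧ G.Adj x3 y2 ∧ G.Adj x3 y3 ∧
    ¬ G.Adj x1 x2 ∧ ¬ G.Adj x1 x3 ∧ ¬ G.Adj x2 x3 ∧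
    ¬ G.Adj y1 y2 ∧ ¬ G.Adj y1 y3 ∧ ¬ G.Adj y2 y3 ∧
    G.sign x2 y1 = false ∧ G.sign x3 y2 = false

/-- `G` contains a member of `F₆` as an induced subgraph. -/
def HasF6 (G : SignedBigraph V) : Prop :=
  ∃ x1 x2 x3 x4 y1 y2 y3 y4 : V,
    [x1, x2, x3, x4, y1, y2, y3, y4].Pairwise (· ≠ ·) ∧
    G.Adj x1 y1 ∧ G.Adj x1 y2 ∧ ¬ G.Adj x1 y3 ∧ ¬ G.Adj x1 y4 ∧
    G.Adj x2 y1 ∧ G.Adj x2 y2 ∧ ¬ G.Adj x2 y3 ∧ ¬ G.Adj x2 y4 ∧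
    G.Adj x3 y1 ∧ G.Adj x3 y2 ∧ G.Adj x3 y3 ∧ G.Adj x3 y4 ∧
    G.Adj x4 y1 ∧ G.Adj x4 y2 ∧ G.Adj x4 y3 ∧ G.Adj x4 y4 ∧
    ¬ G.Adj x1 x2 ∧ ¬ G.Adj x1 x3 ∧ ¬ G.Adj x1 x4 ∧
    ¬ G.Adj x2 x3 ∧ ¬ G.Adj x2 x4 ∧ ¬ G.Adj x3 x4 ∧
    ¬ G.Adj y1 y2 ∧ ¬ G.Adj y1 y3 ∧ ¬ G.Adj y1 y4 ∧
    ¬ G.Adj y2 y3 ∧ ¬ G.Adj y2 y4 ∧ ¬ G.Adj y3 y4 ∧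
    G.sign x1 y1 = false ∧ G.sign x2 y1 = false ∧ G.sign x3 y2 = false ∧
    G.sign x4 y3 = false ∧ G.sign x4 y4 = false

/-- `G` contains a member of `D` (a 6-cycle `x₁y₁x₂y₃x₃y₂x₁` plus a negative chord
`x₂y₂`) as an induced subgraph. -/
def HasD (G : SignedBigraph V) : Prop :=
  ∃ x1 x2 x3 y1 y2 y3 : V,
    [x1, x2, x3, y1, y2, y3].Pairwise (· ≠ ·) ∧
    G.Adj x1 y1 ∧ G.Adj y1 x2 ∧ G.Adj x2 y3 ∧ G.Adj y3 x3 ∧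
    G.Adj x3 y2 ∧ G.Adj y2 x1 ∧
    G.Adj x2 y2 ∧ G.sign x2 y2 = false ∧
    ¬ G.Adj x1 y3 ∧ ¬ G.Adj x3 y1 ∧
    ¬ G.Adj x1 x2 ∧ ¬ G.Adj x1 x3 ∧ ¬ G.Adj x2 x3 ∧
    ¬ G.Adj y1 y2 ∧ ¬ G.Adj y1 y3 ∧ ¬ G.Adj y2 y3

/-- `G` contains an induced signed cycle of length at least 6. -/
def HasLongCycle (G : SignedBigraph V) : Prop :=
  HasLongInducedCycle G.graph

/-! ## Minimal forbidden patterns M₁ – M₅ for complete bigraphs -/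

def HasM1 (G : SignedBigraph V) : Prop := G.HasF1

def HasM2 (G : SignedBigraph V) : Prop :=
  ∃ u1 u2 v1 v2 v3 : V,
    [u1, u2, v1, v2, v3].Pairwise (· ≠ ·) ∧
    G.Adj u1 v1 ∧ G.Adj u1 v2 ∧ G.Adj u1 v3 ∧
    G.Adj u2 v1 ∧ G.Adj u2 v2 ∧ G.Adj u2 v3 ∧
    ¬ G.Adj u1 u2 ∧ ¬ G.Adj v1 v2 ∧ ¬ G.Adj v1 v3 ∧ ¬ G.Adj v2 v3 ∧
    G.sign u1 v1 = false ∧ G.sign u1 v2 = false ∧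
    G.sign u2 v2 = false ∧ G.sign u2 v3 = false ∧
    G.sign u1 v3 = true ∧ G.sign u2 v1 = true

def HasM3 (G : SignedBigraph V) : Prop :=
  ∃ u1 u2 v1 v2 v3 v4 : V,
    [u1, u2, v1, v2, v3, v4].Pairwise (· ≠ ·) ∧
    G.Adj u1 v1 ∧ G.Adj u1 v2 ∧ G.Adj u1 v3 ∧ G.Adj u1 v4 ∧
    G.Adj u2 v1 ∧ G.Adj u2 v2 ∧ G.Adj u2 v3 ∧ G.Adj u2 v4 ∧
    ¬ G.Adj u1 u2 ∧ ¬ G.Adj v1 v2 ∧ ¬ G.Adj v1 v3 ∧ ¬ G.Adj v1 v4 ∧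
    ¬ G.Adj v2 v3 ∧ ¬ G.Adj v2 v4 ∧ ¬ G.Adj v3 v4 ∧
    G.sign u1 v1 = false ∧ G.sign u1 v2 = false ∧
    G.sign u2 v3 = false ∧ G.sign u2 v4 = false ∧
    G.sign u1 v3 = true ∧ G.sign u1 v4 = true ∧
    G.sign u2 v1 = true ∧ G.sign u2 v2 = true

def HasM4 (G : SignedBigraph V) : Prop :=
  ∃ u1 u2 u3 v1 v2 v3 : V,
    [u1, u2, u3, v1, v2, v3].Pairwise (· ≠ ·) ∧
    G.Adj u1 v1 ∧ G.Adj u1 v2 ∧ G.Adj u1 v3 ∧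
    G.Adj u2 v1 ∧ G.Adj u2 v2 ∧ G.Adj u2 v3 ∧
    G.Adj u3 v1 ∧ G.Adj u3 v2 ∧ G.Adj u3 v3 ∧
    ¬ G.Adj u1 u2 ∧ ¬ G.Adj u1 u3 ∧ ¬ G.Adj u2 u3 ∧
    ¬ G.Adj v1 v2 ∧ ¬ G.Adj v1 v3 ∧ ¬ G.Adj v2 v3 ∧
    G.sign u1 v1 = false ∧ G.sign u2 v2 = false ∧ G.sign u3 v3 = false ∧
    G.sign u1 v2 = true ∧ G.sign u1 v3 = true ∧ G.sign u2 v1 = true ∧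
    G.sign u2 v3 = true ∧ G.sign u3 v1 = true ∧ G.sign u3 v2 = true

def HasM5 (G : SignedBigraph V) : Prop :=
  ∃ x1 x2 x3 y1 y2 y3 : V,
    [x1, x2, x3, y1, y2, y3].Pairwise (· ≠ ·) ∧
    G.Adj x1 y1 ∧ G.Adj x1 y2 ∧ G.Adj x1 y3 ∧
    G.Adj x2 y1 ∧ G.Adj x2 y2 ∧ G.Adj x2 y3 ∧
    G.Adj x3 y1 ∧ G.Adj x3 y2 ∧ G.Adj x3 y3 ∧
    ¬ G.Adj x1 x2 ∧ ¬ G.Adj x1 x3 ∧ ¬ G.Adj x2 x3 ∧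
    ¬ G.Adj y1 y2 ∧ ¬ G.Adj y1 y3 ∧ ¬ G.Adj y2 y3 ∧
    G.sign x1 y1 = false ∧ G.sign x1 y2 = false ∧
    G.sign x2 y2 = false ∧ G.sign x3 y3 = false ∧
    G.sign x1 y3 = true ∧ G.sign x2 y1 = true ∧ G.sign x2 y3 = true ∧
    G.sign x3 y1 = true ∧ G.sign x3 y2 = true

/-! ## The patterns W₁ – W₆ (relativized to an ambient vertex set `A`, with the
distinguished vertices being exactly the vertices in `S`). -/

def HasW1In (G : SignedBigraph V) (A S : Set V) : Prop :=
  ∃ u y x z : V, u ∈ A ∧ y ∈ A ∧ x ∈ A ∧ z ∈ A ∧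
    [u, y, x, z].Pairwise (· ≠ ·) ∧
    G.Adj u y ∧ G.Adj u z ∧ G.Adj x y ∧ G.Adj x z ∧
    ¬ G.Adj u x ∧ ¬ G.Adj y z ∧
    G.sign x y = false ∧ G.sign x z = false ∧
    x ∈ S ∧ u ∉ S ∧ y ∉ S ∧ z ∉ S

def HasW2In (G : SignedBigraph V) (A S : Set V) : Prop :=
  ∃ u y v z p : V, u ∈ A ∧ y ∈ A ∧ v ∈ A ∧ z ∈ A ∧ p ∈ A ∧
    [u, y, v, z, p].Pairwise (· ≠ ·) ∧
    G.Adj u y ∧ G.Adj u z ∧ G.Adj v y ∧ G.Adj v z ∧ G.Adj p v ∧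
    ¬ G.Adj u v ∧ ¬ G.Adj y z ∧ ¬ G.Adj p u ∧ ¬ G.Adj p y ∧ ¬ G.Adj p z ∧
    G.sign v y = false ∧ G.sign v z = false ∧
    p ∈ S ∧ u ∉ S ∧ y ∉ S ∧ v ∉ S ∧ z ∉ S

def HasW3In (G : SignedBigraph V) (A S : Set V) : Prop :=
  ∃ u y v z p : V, u ∈ A ∧ y ∈ A ∧ v ∈ A ∧ z ∈ A ∧ p ∈ A ∧
    [u, y, v, z, p].Pairwise (· ≠ ·) ∧
    G.Adj u y ∧ G.Adj u z ∧ G.Adj v y ∧ G.Adj v z ∧ G.Adj p v ∧ G.Adj p u ∧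
    ¬ G.Adj u v ∧ ¬ G.Adj y z ∧ ¬ G.Adj p y ∧ ¬ G.Adj p z ∧
    G.sign v y = false ∧ G.sign v z = false ∧ G.sign p u = false ∧
    p ∈ S ∧ u ∉ S ∧ y ∉ S ∧ v ∉ S ∧ z ∉ S

def HasW4In (G : SignedBigraph V) (A S : Set V) : Prop :=
  ∃ u y c z p q : V, u ∈ A ∧ y ∈ A ∧ c ∈ A ∧ z ∈ A ∧ p ∈ A ∧ q ∈ A ∧
    [u, y, c, z, p, q].Pairwise (· ≠ ·) ∧
    G.Adj u y ∧ G.Adj u z ∧ G.Adj c y ∧ G.Adj c z ∧ G.Adj p c ∧ G.Adj p u ∧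
    G.Adj q p ∧
    ¬ G.Adj u c ∧ ¬ G.Adj y z ∧ ¬ G.Adj p y ∧ ¬ G.Adj p z ∧
    ¬ G.Adj q u ∧ ¬ G.Adj q y ∧ ¬ G.Adj q c ∧ ¬ G.Adj q z ∧
    G.sign c y = false ∧ G.sign c z = false ∧ G.sign p u = false ∧
    q ∈ S ∧ u ∉ S ∧ y ∉ S ∧ c ∉ S ∧ z ∉ S ∧ p ∉ S

def HasW5In (G : SignedBigraph V) (A S : Set V) : Prop :=
  ∃ u y v z x : V, u ∈ A ∧ y ∈ A ∧ v ∈ A ∧ z ∈ A ∧ x ∈ A ∧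
    [u, y, v, z, x].Pairwise (· ≠ ·) ∧
    G.Adj u y ∧ G.Adj u z ∧ G.Adj v y ∧ G.Adj v z ∧ G.Adj x v ∧ G.Adj x u ∧
    ¬ G.Adj u v ∧ ¬ G.Adj y z ∧ ¬ G.Adj x y ∧ ¬ G.Adj x z ∧
    G.sign v y = false ∧ G.sign x u = false ∧
    x ∈ S ∧ y ∈ S ∧ u ∉ S ∧ v ∉ S ∧ z ∉ S

def HasW6In (G : SignedBigraph V) (A S : Set V) : Prop :=
  ∃ u y v z x : V, u ∈ A ∧ y ∈ A ∧ v ∈ A ∧ z ∈ A ∧ x ∈ A ∧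
    [u, y, v, z, x].Pairwise (· ≠ ·) ∧
    G.Adj u y ∧ G.Adj u z ∧ G.Adj v y ∧ G.Adj v z ∧ G.Adj x v ∧
    ¬ G.Adj u v ∧ ¬ G.Adj y z ∧ ¬ G.Adj x u ∧ ¬ G.Adj x y ∧ ¬ G.Adj x z ∧
    G.sign v y = false ∧
    x ∈ S ∧ y ∈ S ∧ u ∉ S ∧ v ∉ S ∧ z ∉ S

/-! ## Tadpoles, sums and joins -/

/-- The vertex set of a tadpole with heads `w, y, z` and path vertices `x`. -/
def tadVerts {n : ℕ} (w y z : V) (x : Fin n → V) : Set V :=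
  {w, y, z} ∪ Set.range x

/-- The data `(w, y, z, x)` forms an induced tadpole in `G`:
`w, y, z, x ⟨k⟩` induce a 4-cycle whose edges `x ⟨k⟩ y` and `x ⟨k⟩ z` are negative,
together with the induced path `x ⟨k⟩, x ⟨k-1⟩, …, x 0`; the vertex `x 0` is the end
and `w, y, z` are the heads.  If `t2 = true` the tadpole is of type 2: there is
additionally a negative edge from `w` to `x ⟨k-1⟩`.
(The paper's parameter `k ≥ 1` corresponds to `k + 1` here.) -/
structure IsInducedTadpole (G : SignedBigraph V) (k : ℕ) (t2 : Bool)
    (w y z : V) (x : Fin (k + 1) → V) : Prop where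
  t2_len : t2 = true → 1 ≤ k
  inj : Function.Injective x
  w_notmem : ∀ i, w ≠ x i
  y_notmem : ∀ i, y ≠ x i
  z_notmem : ∀ i, z ≠ x i
  wy : w ≠ y
  wz : w ≠ z
  yz : y ≠ z
  adj_wy : G.Adj w y
  adj_wz : G.Adj w z
  not_adj_yz : ¬ G.Adj y z
  adj_path : ∀ i j : Fin (k + 1), G.Adj (x i) (x j) ↔ (i.1 + 1 = j.1 ∨ j.1 + 1 = i.1)
  adj_y : ∀ i : Fin (k + 1), G.Adj y (x i) ↔ i.1 = k
  adj_z : ∀ i : Fin (k + 1), G.Adj z (x i) ↔ i.1 = k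
  adj_w : ∀ i : Fin (k + 1), G.Adj w (x i) ↔ (t2 = true ∧ i.1 + 1 = k)
  sign_y : ∀ i : Fin (k + 1), i.1 = k → G.sign (x i) y = false
  sign_z : ∀ i : Fin (k + 1), i.1 = k → G.sign (x i) z = false
  sign_w : ∀ i : Fin (k + 1), t2 = true → i.1 + 1 = k → G.sign w (x i) = false

/-- `G` contains a sum of two tadpoles (identified at their ends) as an induced
subgraph. -/
def HasTadpoleSum (G : SignedBigraph V) : Prop :=
  ∃ (k k' : ℕ) (t t' : Bool) (w y z w' y' z' : V)
    (x : Fin (k + 1) → V) (x' : Fin (k' + 1) → V),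
    G.IsInducedTadpole k t w y z x ∧ G.IsInducedTadpole k' t' w' y' z' x' ∧
    x 0 = x' 0 ∧
    tadVerts w y z x ∩ tadVerts w' y' z' x' = {x 0} ∧
    ∀ a ∈ tadVerts w y z x, ∀ b ∈ tadVerts w' y' z' x',
      a ≠ x 0 → b ≠ x' 0 → ¬ G.Adj a b

/-- `G` contains a join of two tadpoles as an induced subgraph: two disjoint induced
tadpoles such that the edges between them are exactly those joining the end of each
tadpole to all vertices of the other tadpole in the opposite partite set; all these
edges are positive, except that the edge from an end to the head `w` of the other
tadpole may be of either sign when that tadpole is a member of `W₁` (i.e. has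
`k = 0` and is of type 1), in which case the ends are required to be adjacent. -/
def HasTadpoleJoin (G : SignedBigraph V) : Prop :=
  ∃ (k k' : ℕ) (t t' : Bool) (w y z w' y' z' : V)
    (x : Fin (k + 1) → V) (x' : Fin (k' + 1) → V),
    G.IsInducedTadpole k t w y z x ∧ G.IsInducedTadpole k' t' w' y' z' x' ∧
    Disjoint (tadVerts w y z x) (tadVerts w' y' z' x') ∧
    (∀ a ∈ tadVerts w y z x, ∀ b ∈ tadVerts w' y' z' x',
      (G.Adj a b ↔ ((a = x 0 ∨ b = x' 0) ∧ G.side a ≠ G.side b))) ∧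
    ((k = 0 ∧ t = false) ∨ (k' = 0 ∧ t' = false) → G.side (x 0) ≠ G.side (x' 0)) ∧
    (∀ a ∈ tadVerts w y z x, ∀ b ∈ tadVerts w' y' z' x', G.Adj a b →
      ¬ (a = x 0 ∧ b = w' ∧ k' = 0 ∧ t' = false) →
      ¬ (a = w ∧ b = x' 0 ∧ k = 0 ∧ t = false) →
      G.sign a b = true)

/-- `G` contains a member of
`ℱ = F₁ ∪ F₂ ∪ F₃ ∪ F₄ ∪ F₅ ∪ F₆ ∪ 𝒞 ∪ D ∪ 𝒮 ∪ 𝒥` as an induced subgraph. -/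
def HasForbidden (G : SignedBigraph V) : Prop :=
  G.HasF1 ∨ G.HasF2 ∨ G.HasF3 ∨ G.HasF4 ∨ G.HasF5 ∨ G.HasF6 ∨
  G.HasLongCycle ∨ G.HasD ∨ G.HasTadpoleSum ∨ G.HasTadpoleJoin

/-- `G` is `ℱ`-free. -/
def FFree (G : SignedBigraph V) : Prop := ¬ G.HasForbidden

end SignedBigraph

/-! ## Concrete complete signed bipartite graphs (for the graphs M₁ – M₅) -/

/-- The complete bipartite graph on `Fin a ⊕ Fin b`. -/
def cbsGraph (a b : ℕ) : SimpleGraph (Fin a ⊕ Fin b) where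
  Adj u v := u.isLeft ≠ v.isLeft
  symm := ⟨fun _ _ h => Ne.symm h⟩
  loopless := ⟨fun _ h => h rfl⟩

def cbsSign {a b : ℕ} (sgn : Fin a → Fin b → Bool) :
    Fin a ⊕ Fin b → Fin a ⊕ Fin b → Bool
  | Sum.inl i, Sum.inr j => sgn i j
  | Sum.inr j, Sum.inl i => sgn i j
  | _, _ => true

/-- The complete signed bipartite graph with parts `Fin a`, `Fin b`, and signs given
by `sgn`. -/
def completeSignedBigraph (a b : ℕ) (sgn : Fin a → Fin b → Bool) :
    SignedBigraph (Fin a ⊕ Fin b) where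
  graph := cbsGraph a b
  sign := cbsSign sgn
  sign_symm := by
    intro u v
    cases u <;> cases v <;> rfl
  side := Sum.isLeft
  bipartite := fun _ _ h => h

/-- `M₁`: the all-negative 4-cycle. -/
def Mgraph1 : SignedBigraph (Fin 2 ⊕ Fin 2) :=
  completeSignedBigraph 2 2 (fun _ _ => false)

/-- `M₂`. -/
def Mgraph2 : SignedBigraph (Fin 2 ⊕ Fin 3) :=
  completeSignedBigraph 2 3
    (fun i j => ! decide ((i = 0 ∧ (j = 0 ∨ j = 1)) ∨ (i = 1 ∧ (j = 1 ∨ j = 2))))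

/-- `M₃`. -/
def Mgraph3 : SignedBigraph (Fin 2 ⊕ Fin 4) :=
  completeSignedBigraph 2 4
    (fun i j => ! decide ((i = 0 ∧ (j = 0 ∨ j = 1)) ∨ (i = 1 ∧ (j = 2 ∨ j = 3))))

/-- `M₄`. -/
def Mgraph4 : SignedBigraph (Fin 3 ⊕ Fin 3) :=
  completeSignedBigraph 3 3 (fun i j => ! decide ((i : ℕ) = (j : ℕ)))

/-- `M₅`. -/
def Mgraph5 : SignedBigraph (Fin 3 ⊕ Fin 3) :=
  completeSignedBigraph 3 3
    (fun i j => ! decide ((i = 0 ∧ (j = 0 ∨ j = 1)) ∨ (i = 1 ∧ j = 1) ∨ (i = 2 ∧ j = 2)))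

/-!
Take the first edge `ab` of a chordal ordering that meets `H₁ ∪ H₂`, say `a ∈ H₁`. The edges
deleted before it avoid `H₁ ∪ H₂`, so every edge at a vertex of a component survives. If `b ∈ S`,
a neighbour of `a` in `H₁` and a neighbour of `b` in `H₂` lie in `N(ab)` on opposite sides, so
simpliciality would join them by an edge between two different components. Hence `b ∈ H₁`; then
no edge at `a` or `b` has been deleted, and `ab` is already signed simplicial in `Ĝ`.
-/

variable {V : Type u}

theorem SimpleGraph.neighborSet_deleteEdges_of_forall_notMem {G : SimpleGraph V}
    {s : Set (Sym2 V)} {v : V} (h : ∀ e ∈ s, v ∉ e) :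
    (G.deleteEdges s).neighborSet v = G.neighborSet v := by
  ext w
  simp only [SimpleGraph.mem_neighborSet, SimpleGraph.deleteEdges_adj, and_iff_left_iff_imp]
  exact fun _ hw => h _ hw (Sym2.mem_mk_left v w)

namespace IsNontrivialComponentOf

variable {G : SimpleGraph V} {S H H' : Set V}

theorem subset_of_mem (hH : IsNontrivialComponentOf G S H)
    (hH' : IsNontrivialComponentOf G S H') {v : V} (hv : v ∈ H) (hv' : v ∈ H') : H ⊆ H' := by
  suffices ∀ x : H, (G.induce H).Reachable ⟨v, hv⟩ x → (x : V) ∈ H' from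
    fun u hu => this ⟨u, hu⟩ (hH.2.1.preconnected _ _)
  intro x hx
  replace hx := (SimpleGraph.reachable_iff_reflTransGen _ _).1 hx
  induction hx with
  | refl => exact hv'
  | tail _ hxy ih => exact hH'.2.2.1 _ ih _ (hH.1 (Subtype.prop _)) hxy

theorem exists_adj (hH : IsNontrivialComponentOf G S H) {a : V} (ha : a ∈ H) :
    ∃ c ∈ H, G.Adj a c := by
  obtain ⟨p, hp, q, hq, hpq⟩ := hH.2.2.2
  rcases Relation.ReflTransGen.cases_head_iff.1 <| (SimpleGraph.reachable_iff_reflTransGen _ _).1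
    (hH.2.1.preconnected ⟨a, ha⟩ ⟨p, hp⟩) with hap | ⟨c, hac, -⟩
  · obtain rfl : a = p := congrArg Subtype.val hap
    exact ⟨q, hq, hpq⟩
  · exact ⟨c, c.2, hac⟩

end IsNontrivialComponentOf

namespace MinimallySeparates

variable {G : SimpleGraph V} {S H₁ H₂ : Set V}

theorem symm (h : MinimallySeparates G S H₁ H₂) : MinimallySeparates G S H₂ H₁ :=
  ⟨h.2.1, h.1, h.2.2.1.symm, fun s hs => (h.2.2.2 s hs).symm⟩

theorem disjoint (h : MinimallySeparates G S H₁ H₂) : Disjoint H₁ H₂ :=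
  Set.disjoint_left.2 fun _ hv hv' => h.2.2.1 <|
    (h.1.subset_of_mem h.2.1 hv hv').antisymm (h.2.1.subset_of_mem h.1 hv' hv)

end MinimallySeparates

namespace SignedBigraph

variable {G : SignedBigraph V} {a b : V}

theorem edgeNbhd_comm (G : SignedBigraph V) (a b : V) : G.edgeNbhd a b = G.edgeNbhd b a := by
  rw [edgeNbhd, edgeNbhd, Set.union_comm, Set.pair_comm]

theorem SignedSimplicial.symm (h : G.SignedSimplicial a b) : G.SignedSimplicial b a :=
  ⟨G.graph.adj_symm h.1, G.edgeNbhd_comm a b ▸ h.2⟩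

theorem SignedSimplicial.of_deleteEdges {s : Set (Sym2 V)} (hs : ∀ e ∈ s, a ∉ e ∧ b ∉ e)
    (h : (G.deleteEdges s).SignedSimplicial a b) : G.SignedSimplicial a b := by
  have hnbhd : (G.deleteEdges s).edgeNbhd a b = G.edgeNbhd a b := by
    simp only [edgeNbhd, deleteEdges,
      SimpleGraph.neighborSet_deleteEdges_of_forall_notMem fun e he => (hs e he).1,
      SimpleGraph.neighborSet_deleteEdges_of_forall_notMem fun e he => (hs e he).2]
  refine ⟨(SimpleGraph.deleteEdges_adj.1 h.1).1, fun c hc d hd hcd => ?_⟩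
  obtain ⟨hadj, hsign⟩ := h.2 c (hnbhd ▸ hc) d (hnbhd ▸ hd) hcd
  exact ⟨(SimpleGraph.deleteEdges_adj.1 hadj).1, hsign⟩

theorem IsChordal.exists_signedSimplicial_deleteEdges (hch : G.IsChordal) {A : Set V}
    (hA : ∃ a ∈ A, ∃ b, G.Adj a b) :
    ∃ s : Set (Sym2 V), (∀ e ∈ s, ∀ v ∈ e, v ∉ A) ∧
      ∃ a ∈ A, ∃ b, G.Adj a b ∧ (G.deleteEdges s).SignedSimplicial a b := by
  classical
  obtain ⟨l, -, hl, hord⟩ := hch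
  obtain ⟨a₀, ha₀, b₀, hab₀⟩ := hA
  have hex : ∃ i, ∃ hi : i < l.length, ∃ v ∈ l[i], v ∈ A := by
    obtain ⟨i, hi, he⟩ := List.getElem_of_mem ((hl _).1 (G.graph.mem_edgeSet.2 hab₀))
    exact ⟨i, hi, a₀, he ▸ Sym2.mem_mk_left _ _, ha₀⟩
  obtain ⟨hi, v, hv, hvA⟩ := Nat.find_spec hex
  obtain ⟨a, b, hget, hsimp⟩ := hord _ hi
  refine ⟨{e | e ∈ l.take (Nat.find hex)}, ?_, ?_⟩
  · rintro e he w hw hwA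
    obtain ⟨j, hj, rfl⟩ := List.mem_take_iff_getElem.1 he
    exact Nat.find_min hex (lt_min_iff.1 hj).1 ⟨_, w, hw, hwA⟩
  · have hab : G.Adj a b := G.graph.mem_edgeSet.1 ((hl _).2 (hget ▸ List.get_mem l _))
    have hv' : v ∈ l.get ⟨_, hi⟩ := hv
    rw [hget, Sym2.mem_iff] at hv'
    rcases hv' with rfl | rfl
    · exact ⟨v, hvA, b, hab, hsimp⟩
    · exact ⟨v, hvA, a, G.graph.adj_symm hab, hsimp.symm⟩

end SignedBigraph

namespace MinimallySeparates

open SignedBigraph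

variable {G : SignedBigraph V} {S H₁ H₂ : Set V} {s : Set (Sym2 V)} {a b : V}

theorem mem_of_signedSimplicial_deleteEdges (hmin : MinimallySeparates G.graph S H₁ H₂)
    (hs : ∀ e ∈ s, ∀ v ∈ e, v ∉ H₁ ∪ H₂) (ha : a ∈ H₁) (hab : G.Adj a b)
    (h : (G.deleteEdges s).SignedSimplicial a b) : b ∈ H₁ := by
  by_contra hb
  have hbS : b ∈ S := by_contra fun hbS => hb (hmin.1.2.2.1 a ha b hbS hab)
  have keep : ∀ {u w}, u ∈ H₁ ∪ H₂ → G.Adj u w → (G.deleteEdges s).Adj u w := fun hu huw =>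
    SimpleGraph.deleteEdges_adj.2 ⟨huw, fun he => hs _ he _ (Sym2.mem_mk_left _ _) hu⟩
  obtain ⟨c, hc, hac⟩ := hmin.1.exists_adj ha
  obtain ⟨d, hd, hbd⟩ := (hmin.2.2.2 b hbS).2
  have hcN : c ∈ (G.deleteEdges s).edgeNbhd a b := by
    refine ⟨Or.inl (keep (Or.inl ha) hac), ?_⟩
    rintro (rfl | rfl)
    exacts [G.graph.loopless.irrefl _ hac, hmin.1.1 hc hbS]
  have hdN : d ∈ (G.deleteEdges s).edgeNbhd a b := by
    have hdb := keep (Or.inr hd) (G.graph.adj_symm hbd)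
    refine ⟨Or.inr ((G.deleteEdges s).graph.adj_symm hdb), ?_⟩
    rintro (rfl | rfl)
    exacts [Set.disjoint_left.1 hmin.disjoint ha hd, hmin.2.1.1 hd hbS]
  have hside : G.side c ≠ G.side d := by
    have hac' := G.bipartite hac; have hab' := G.bipartite hab; have hbd' := G.bipartite hbd
    revert hac' hab' hbd'
    cases G.side a <;> cases G.side b <;> cases G.side c <;> cases G.side d <;> decide
  have hcd := (h.2 c hcN d hdN hside).1
  exact Set.disjoint_left.1 hmin.disjoint
    (hmin.1.2.2.1 c hc d (hmin.2.1.1 hd) (SimpleGraph.deleteEdges_adj.1 hcd).1) hd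

theorem signedSimplicial_of_deleteEdges (hmin : MinimallySeparates G.graph S H₁ H₂)
    (hs : ∀ e ∈ s, ∀ v ∈ e, v ∉ H₁ ∪ H₂) (ha : a ∈ H₁) (hab : G.Adj a b)
    (h : (G.deleteEdges s).SignedSimplicial a b) : b ∈ H₁ ∧ G.SignedSimplicial a b := by
  have hb := hmin.mem_of_signedSimplicial_deleteEdges hs ha hab h
  exact ⟨hb, h.of_deleteEdges fun e he =>
    ⟨fun hae => hs e he a hae (Or.inl ha), fun hbe => hs e he b hbe (Or.inl hb)⟩⟩

end MinimallySeparates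

open SignedBigraph in
theorem exists_signedSimplicial_in_component_general
    {V : Type u} (G : SignedBigraph V)
    (hch : G.IsChordal)
    (S H1 H2 : Set V)
    (hmin : MinimallySeparates G.graph S H1 H2) :
    ∃ a b : V, ((a ∈ H1 ∧ b ∈ H1) ∨ (a ∈ H2 ∧ b ∈ H2)) ∧
      G.SignedSimplicial a b := by
  obtain ⟨a₀, ha₀, b₀, -, hab₀⟩ := hmin.1.2.2.2
  obtain ⟨s, hs, a, ha, b, hab, hsimp⟩ :=
    hch.exists_signedSimplicial_deleteEdges (A := H1 ∪ H2) ⟨a₀, Or.inl ha₀, b₀, hab₀⟩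
  rcases ha with ha | ha
  · obtain ⟨hb, h⟩ := hmin.signedSimplicial_of_deleteEdges hs ha hab hsimp
    exact ⟨a, b, Or.inl ⟨ha, hb⟩, h⟩
  · obtain ⟨hb, h⟩ := hmin.symm.signedSimplicial_of_deleteEdges (Set.union_comm H1 H2 ▸ hs) ha
      hab hsimp
    exact ⟨a, b, Or.inr ⟨ha, hb⟩, h⟩

open SignedBigraph in
/-- Lemma 4.3: if `S` minimally separates the non-trivial
components `Ĥ₁` and `Ĥ₂` of a chordal signed separable bigraph `Ĝ`, then `Ĥ₁` or
`Ĥ₂` contains an edge which is a signed simplicial edge of `Ĝ`. -/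
theorem exists_signedSimplicial_in_component
    {V : Type u} [Fintype V] (G : SignedBigraph V)
    (hch : G.IsChordal)
    (hsep : IsSeparableGraph G.graph)
    (S H1 H2 : Set V)
    (hmin : MinimallySeparates G.graph S H1 H2) :
    ∃ a b : V, ((a ∈ H1 ∧ b ∈ H1) ∨ (a ∈ H2 ∧ b ∈ H2)) ∧
      G.SignedSimplicial a b :=
  exists_signedSimplicial_in_component_general G hch S H1 H2 hmin
end

section
/- Every positive signed bigraph (a signed bigraph all of whose edges are positive) whose underlying bipartite graph is chordal bipartite is a chordal signed bigraph. -/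
universe u

/-!
A chordal bipartite graph with an edge has a simplicial edge `ab` (every neighbour of `a` is
adjacent to every neighbour of `b`). In a positive signed bigraph such an edge is signed
simplicial, and deleting it keeps the graph chordal bipartite, so simplicial edges can be
removed one after another.

To find a simplicial edge, label the vertices injectively by `w` so that of two nonadjacent
vertices the one with the larger label has the colex-larger set of neighbour labels; maximising
`∑_{x ~ y} 2 ^ (w x + w y)` over all labellings gives such a `w`. Let `a` be the first
non-isolated vertex and `b` its first neighbour. If `ab` were not simplicial, the labelling would
let one grow an induced "ladder" rung by rung forever: each new rung either closes it into an
induced cycle of length at least 6 or gives a longer ladder, and the ladders cannot outgrow `V`.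
-/

lemma side_eq_of_adj_of_adj {V : Type u} {G : SimpleGraph V} {side : V → Bool}
    (hbip : ∀ ⦃a b : V⦄, G.Adj a b → side a ≠ side b) ⦃c d x : V⦄
    (hc : G.Adj c x) (hd : G.Adj d x) : side c = side d :=
  (Bool.eq_not_iff.2 (hbip hc)).trans (Bool.eq_not_iff.2 (hbip hd)).symm

namespace SignedBigraph

variable {V : Type u}

@[simp]
lemma deleteEdges_empty (G : SignedBigraph V) : G.deleteEdges ∅ = G := by
  cases G; simp [deleteEdges]

lemma deleteEdges_deleteEdges (G : SignedBigraph V) (s t : Set (Sym2 V)) :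
    (G.deleteEdges s).deleteEdges t = G.deleteEdges (s ∪ t) := by
  simp [deleteEdges, SimpleGraph.deleteEdges_deleteEdges]

lemma isChordal_of_forall_not_adj (G : SignedBigraph V) (h : ∀ a b, ¬ G.Adj a b) :
    G.IsChordal := by
  refine ⟨[], List.nodup_nil, fun e => ?_, fun i hi => absurd hi (Nat.not_lt_zero i)⟩
  induction e with
  | h a b => exact iff_of_false (h a b) List.not_mem_nil

lemma IsChordal.of_deleteEdges {G : SignedBigraph V} {a b : V} (hab : G.SignedSimplicial a b)
    (hG : (G.deleteEdges {s(a, b)}).IsChordal) : G.IsChordal := by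
  obtain ⟨l, hnodup, hmem, hsimp⟩ := hG
  have hedges : (G.deleteEdges {s(a, b)}).graph.edgeSet = G.graph.edgeSet \ {s(a, b)} :=
    SimpleGraph.edgeSet_deleteEdges _
  refine ⟨s(a, b) :: l, List.nodup_cons.2 ⟨fun h => ?_, hnodup⟩, fun e => ?_, ?_⟩
  · simpa [hedges] using (hmem _).2 h
  · by_cases he : e = s(a, b)
    · subst he; exact iff_of_true hab.1 List.mem_cons_self
    · simp [← hmem, hedges, he]
  · rintro (_ | i) hi
    · exact ⟨a, b, rfl, by simpa using hab⟩
    · obtain ⟨c, d, hcd, hsimp⟩ := hsimp i (by simpa using hi)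
      refine ⟨c, d, hcd, ?_⟩
      convert hsimp using 1
      rw [deleteEdges_deleteEdges]
      congr 1
      ext e
      simp [or_comm]

theorem isChordal_of_forall_exists_signedSimplicial [Finite V] (P : SignedBigraph V → Prop)
    (hP : ∀ G, P G → (∃ a b, G.Adj a b) →
      ∃ a b, G.SignedSimplicial a b ∧ P (G.deleteEdges {s(a, b)}))
    (G : SignedBigraph V) (hG : P G) : G.IsChordal := by
  induction h : G.graph.edgeSet.ncard using Nat.strong_induction_on generalizing G with
  | _ k ih =>
    by_cases hedge : ∃ a b, G.Adj a b
    · obtain ⟨a, b, hab, hPab⟩ := hP G hG hedge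
      refine IsChordal.of_deleteEdges hab (ih _ ?_ _ hPab rfl)
      rw [← h, deleteEdges, SimpleGraph.edgeSet_deleteEdges]
      exact Set.ncard_sdiff_singleton_lt_of_mem hab.1 (Set.toFinite _)
    · exact G.isChordal_of_forall_not_adj (not_exists.1 <| not_exists.1 hedge ·)

end SignedBigraph

section SimplicialEdge

variable {V : Type u} {G : SimpleGraph V} {a b : V}

lemma SimplicialEdge.not_hasLongInducedCycle_deleteEdges (hab : SimplicialEdge G a b)
    (hG : ¬ HasLongInducedCycle G) : ¬ HasLongInducedCycle (G.deleteEdges {s(a, b)}) := by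
  rintro ⟨n, hn, f, hf, hcyc⟩
  have hadj : ∀ x y, (G.deleteEdges {s(a, b)}).Adj x y ↔ G.Adj x y ∧ s(x, y) ≠ s(a, b) := by
    simp
  by_cases hon : ∃ p q, f p = a ∧ f q = b
  · obtain ⟨p, q, rfl, rfl⟩ := hon
    have : Fact (1 < n) := ⟨by omega⟩
    have hnext : ∀ i : ZMod n, i + 1 ≠ i := by simp
    have hpq : ¬ (q = p + 1 ∨ p = q + 1) := fun h => by simpa [hadj] using (hcyc p q).2 h
    push Not at hpq
    -- the successors of `a` and `b` on the cycle would be joined by a chord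
    have hchord : G.Adj (f (p + 1)) (f (q + 1)) :=
      hab.2 _ ⟨((hadj _ _).1 ((hcyc _ _).2 (Or.inl rfl))).1, fun h => hpq.1 (hf h).symm⟩
        _ ⟨((hadj _ _).1 ((hcyc _ _).2 (Or.inl rfl))).1, fun h => hpq.2 (hf h).symm⟩
    have hne : s(f (p + 1), f (q + 1)) ≠ s(f p, f q) := by
      simp [hf.eq_iff, hnext, hpq.2.symm]
    rcases (hcyc _ _).1 ((hadj _ _).2 ⟨hchord, hne⟩) with h | h
    · exact hpq.1 (add_right_cancel h)
    · exact hpq.2 (add_right_cancel h)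
  · refine hG ⟨n, hn, f, hf, fun i j => ?_⟩
    rw [← hcyc, hadj, iff_self_and]
    intro _ h
    rcases Sym2.eq_iff.1 h with ⟨hi, hj⟩ | ⟨hi, hj⟩
    exacts [hon ⟨i, j, hi, hj⟩, hon ⟨j, i, hj, hi⟩]

end SimplicialEdge

lemma SignedBigraph.signedSimplicial_of_simplicialEdge {V : Type u} {G : SignedBigraph V}
    (hpos : ∀ a b : V, G.Adj a b → G.sign a b = true) {a b : V}
    (hab : SimplicialEdge G.graph a b) : G.SignedSimplicial a b := by
  have hside := side_eq_of_adj_of_adj G.bipartite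
  refine ⟨hab.1, fun c ⟨hc, hcab⟩ d ⟨hd, hdab⟩ hcd => ?_⟩
  simp only [Set.mem_insert_iff, Set.mem_singleton_iff, not_or] at hcab hdab
  suffices G.Adj c d from ⟨this, hpos c d this⟩
  rcases hc with hc | hc <;> rcases hd with hd | hd
  · exact absurd (hside hc.symm hd.symm) hcd
  · exact hab.2 c ⟨hc, hcab.2⟩ d ⟨hd, hdab.1⟩
  · exact (hab.2 d ⟨hd, hdab.2⟩ c ⟨hc, hcab.1⟩).symm
  · exact absurd (hside hc.symm hd.symm) hcd

section LexLabelling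

open Finset Matrix Colex
open scoped symmDiff

variable {V : Type u} [Fintype V] (G : SimpleGraph V) [DecidableRel G.Adj]

def IsLexLabelling (w : V → ℕ) : Prop :=
  Function.Injective w ∧ ∀ a b, ¬ G.Adj a b → w a < w b →
    toColex ((G.neighborFinset a).image w) ≤ toColex ((G.neighborFinset b).image w)

lemma dotProduct_adjMatrix_mulVec_comp_swap {R : Type*} [CommRing R] [DecidableEq V] (h : V → R)
    {a b : V} (hab : a ≠ b) (hnadj : ¬ G.Adj a b) :
    (h ∘ Equiv.swap a b) ⬝ᵥ G.adjMatrix R *ᵥ (h ∘ Equiv.swap a b) =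
      h ⬝ᵥ G.adjMatrix R *ᵥ h +
        2 * (h b - h a) * ((G.adjMatrix R *ᵥ h) a - (G.adjMatrix R *ᵥ h) b) := by
  set A := G.adjMatrix R
  set δ : V → R := Pi.single a (h b - h a) + Pi.single b (h a - h b)
  have hswap : h ∘ Equiv.swap a b = h + δ := by
    ext x
    rcases eq_or_ne x a with rfl | hxa
    · simp [δ, hab]
    rcases eq_or_ne x b with rfl | hxb
    · simp [δ, hab.symm]
    · simp [δ, Equiv.swap_apply_of_ne_of_ne hxa hxb, hxa, hxb]
  have hδ : ∀ v : V → R, δ ⬝ᵥ v = (h b - h a) * (v a - v b) := fun v => by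
    simp only [δ, add_dotProduct, single_dotProduct]; ring
  have hsymm : ∀ u v : V → R, u ⬝ᵥ A *ᵥ v = v ⬝ᵥ A *ᵥ u := fun u v => by
    rw [dotProduct_mulVec, ← mulVec_transpose, G.transpose_adjMatrix, dotProduct_comm]
  -- `a` and `b` are nonadjacent, so `δ` vanishes on both neighbourhoods
  have hAδ : ∀ v, v = a ∨ v = b → (A *ᵥ δ) v = 0 := by
    refine fun v hv => (G.adjMatrix_mulVec_apply v δ).trans (sum_eq_zero fun x hx => ?_)
    have hx : G.Adj v x := (G.mem_neighborFinset v x).1 hx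
    have hxa : x ≠ a := by rintro rfl; rcases hv with rfl | rfl <;> simp_all [G.adj_comm]
    have hxb : x ≠ b := by rintro rfl; rcases hv with rfl | rfl <;> simp_all
    simp [δ, hxa, hxb]
  rw [hswap, mulVec_add, dotProduct_add (h + δ), add_dotProduct h δ, add_dotProduct h δ,
    hsymm h δ, hδ, hδ, hAδ a (.inl rfl), hAδ b (.inr rfl)]
  ring

theorem exists_isLexLabelling : ∃ w, IsLexLabelling G w := by
  classical
  have : Nonempty (V ≃ Fin (Fintype.card V)) := ⟨Fintype.equivFin V⟩
  obtain ⟨σ, hσ⟩ := Finite.exists_max fun σ : V ≃ Fin (Fintype.card V) =>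
    (fun x => (2 : ℤ) ^ (σ x : ℕ)) ⬝ᵥ G.adjMatrix ℤ *ᵥ fun x => (2 : ℤ) ^ (σ x : ℕ)
  set w : V → ℕ := fun x => σ x
  have hw : Function.Injective w := fun x y h => σ.injective (Fin.val_injective h)
  refine ⟨w, hw, fun a b hnadj hlt => ?_⟩
  set h : V → ℤ := fun x => 2 ^ w x
  have hmax := hσ ((Equiv.swap a b).trans σ)
  change (h ∘ Equiv.swap a b) ⬝ᵥ _ *ᵥ (h ∘ Equiv.swap a b) ≤ h ⬝ᵥ _ at hmax
  rw [dotProduct_adjMatrix_mulVec_comp_swap G h (fun hab => hlt.ne (congrArg w hab)) hnadj] at hmax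
  have hhab : h a < h b := pow_lt_pow_right₀ one_lt_two hlt
  have hW : (G.adjMatrix ℤ *ᵥ h) a ≤ (G.adjMatrix ℤ *ᵥ h) b := by nlinarith
  simp only [SimpleGraph.adjMatrix_mulVec_apply, h] at hW
  rw [← geomSum_le_geomSum_iff_toColex_le_toColex le_rfl, sum_image hw.injOn, sum_image hw.injOn]
  exact_mod_cast hW

variable {G} {w : V → ℕ}

lemma IsLexLabelling.exists_max_adj_not_adj (hw : IsLexLabelling G w) {a b z : V}
    (hnadj : ¬ G.Adj a b) (hlt : w a < w b) (haz : G.Adj a z) (hbz : ¬ G.Adj b z) :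
    ∃ m, G.Adj b m ∧ ¬ G.Adj a m ∧ w z < w m ∧ ∀ y, w m < w y → (G.Adj a y ↔ G.Adj b y) := by
  set s := (G.neighborFinset a).image w
  set t := (G.neighborFinset b).image w
  have hmem : ∀ {v y}, w y ∈ (G.neighborFinset v).image w ↔ G.Adj v y := by
    simp [hw.1.mem_finset_image]
  have hst : s ≠ t := fun h => hbz (hmem.1 (h ▸ hmem.2 haz : w z ∈ t))
  have hmax := toColex_le_toColex_iff_max'_mem.1 (hw.2 a b hnadj hlt) hst
  obtain ⟨m, -, hm⟩ := mem_image.1 hmax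
  have hle : ∀ y, ¬ (G.Adj a y ↔ G.Adj b y) → w y ≤ w m := fun y hy =>
    hm ▸ le_max' _ _ (by rw [mem_symmDiff, hmem, hmem]; tauto)
  have hbm : G.Adj b m := hmem.1 (hm ▸ hmax)
  have ham : ¬ G.Adj a m := by
    have := hm ▸ max'_mem (s ∆ t) (symmDiff_nonempty.2 hst)
    rw [mem_symmDiff, hmem, hmem] at this
    tauto
  refine ⟨m, hbm, ham, lt_of_le_of_ne (hle z (by tauto)) ?_, fun y hy => ?_⟩
  · rintro h; exact ham (hw.1 h ▸ haz)
  · by_contra h; exact (hle y h).not_gt hy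

end LexLabelling

section LongCycle

variable {V : Type u} {G : SimpleGraph V}

lemma hasLongInducedCycle_of_nat {L : ℕ} (hL : 6 ≤ L) {g : ℕ → V} (hinj : Set.InjOn g (Set.Iio L))
    (hadj : ∀ k < L, ∀ l < L, G.Adj (g k) (g l) ↔
      k + 1 = l ∨ l + 1 = k ∨ (k + 1 = L ∧ l = 0) ∨ (l + 1 = L ∧ k = 0)) :
    HasLongInducedCycle G := by
  have : NeZero L := ⟨by omega⟩
  have : Fact (1 < L) := ⟨by omega⟩
  have hsucc (i j : ZMod L) : j = i + 1 ↔ j.val = i.val + 1 ∨ (i.val + 1 = L ∧ j.val = 0) := by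
    rw [← (ZMod.val_injective L).eq_iff, ZMod.val_add, ZMod.val_one]
    have hi := ZMod.val_lt i
    have hj := ZMod.val_lt j
    rcases (Nat.lt_or_eq_of_le hi : i.val + 1 < L ∨ i.val + 1 = L) with h | h
    · rw [Nat.mod_eq_of_lt h]; omega
    · rw [h, Nat.mod_self]; omega
  refine ⟨L, hL, fun z => g z.val, fun x y h => ZMod.val_injective L <|
    hinj (ZMod.val_lt x) (ZMod.val_lt y) h, fun i j => ?_⟩
  rw [hadj _ (ZMod.val_lt i) _ (ZMod.val_lt j), hsucc, hsucc]
  omega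

variable {side : V → Bool}

lemma hasLongInducedCycle_of_closedLadder (hbip : ∀ ⦃a b : V⦄, G.Adj a b → side a ≠ side b)
    {m : ℕ} (hm : 3 ≤ m) {r c : ℕ → V} (hr : Set.InjOn r (Set.Iio m))
    (hc : Set.InjOn c (Set.Iio m)) (hsr : ∀ i < m, side (r i) = side (r 0))
    (hsc : ∀ j < m, side (c j) = side (c 0))
    (hadj : ∀ i < m, ∀ j < m, G.Adj (r i) (c j) ↔
      i + 1 = j ∨ j + 1 = i ∨ i + j = 0 ∨ (i + 1 = m ∧ j + 1 = m)) :
    HasLongInducedCycle G := by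
  have hs0 : side (r 0) ≠ side (c 0) := hbip ((hadj 0 (by omega) 0 (by omega)).2 (by omega))
  have hrr : ∀ i < m, ∀ j < m, ¬ G.Adj (r i) (r j) := fun i hi j hj h =>
    hbip h ((hsr i hi).trans (hsr j hj).symm)
  have hcc : ∀ i < m, ∀ j < m, ¬ G.Adj (c i) (c j) := fun i hi j hj h =>
    hbip h ((hsc i hi).trans (hsc j hj).symm)
  have hrc : ∀ i < m, ∀ j < m, r i ≠ c j := fun i hi j hj h =>
    hs0 ((hsr i hi).symm.trans (h ▸ hsc j hj))
  -- the cycle runs `r 0, c 1, r 2, …` out along the ladder and returns `…, c 2, r 1, c 0`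
  set idx : ℕ → ℕ := fun k => if k < m then k else 2 * m - 1 - k
  have hidx : ∀ k < 2 * m, idx k < m := fun k hk => by simp only [idx]; split_ifs <;> omega
  refine hasLongInducedCycle_of_nat (L := 2 * m) (by omega)
    (g := fun k => if k % 2 = 0 then r (idx k) else c (idx k)) ?_ ?_
  · intro k hk l hl h
    simp only [Set.mem_Iio] at hk hl
    have hk' := hidx k hk; have hl' := hidx l hl
    dsimp only at h
    split_ifs at h with h1 h2 h2
    · have := hr hk' hl' h; simp only [idx] at this; split_ifs at this <;> omega
    · exact absurd h (hrc _ hk' _ hl')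
    · exact absurd h.symm (hrc _ hl' _ hk')
    · have := hc hk' hl' h; simp only [idx] at this; split_ifs at this <;> omega
  · intro k hk l hl
    have hk' := hidx k hk; have hl' := hidx l hl
    split_ifs with h1 h2 h2
    · exact iff_of_false (hrr _ hk' _ hl') (by omega)
    · rw [hadj _ hk' _ hl']; simp only [idx]; split_ifs <;> omega
    · rw [G.adj_comm, hadj _ hl' _ hk']; simp only [idx]; split_ifs <;> omega
    · exact iff_of_false (hcc _ hk' _ hl') (by omega)

end LongCycle

lemma strictMonoOn_update_Iio {β : Type*} [Preorder β] {g : ℕ → β} {k : ℕ} {b : β}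
    (hg : StrictMonoOn g (Set.Iio (k + 1))) (hb : g k < b) :
    StrictMonoOn (Function.update g (k + 1) b) (Set.Iio (k + 2)) := by
  intro i hi j hj hij
  simp only [Set.mem_Iio] at hi hj
  rw [Function.update_of_ne (by omega)]
  rcases (by omega : j < k + 1 ∨ j = k + 1) with hj | rfl
  · rw [Function.update_of_ne (by omega)]
    exact hg (by simp; omega) hj hij
  · rw [Function.update_self]
    exact (hg.monotoneOn (by simp; omega) (by simp) (by omega)).trans_lt hb

section Ladder

variable {V : Type u} {G : SimpleGraph V} {side : V → Bool} {w : V → ℕ} {n : ℕ} {r c : ℕ → V}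

/-- Rows `r 0, …, r (n + 1)` and columns `c 0, …, c (n + 1)` with `r i ~ c j` iff `|i - j| = 1`
or `i = j = 0`: two induced paths `r 0, c 1, r 2, …` and `c 0, r 1, c 2, …` joined by the rung
`r 0 c 0`. The `agree` fields record that `c (i + 2)` was chosen as the `w`-largest vertex
separating the neighbourhoods of `r i` and `r (i + 1)`. -/
structure IsLadder (G : SimpleGraph V) (side : V → Bool) (w : V → ℕ) (n : ℕ) (r c : ℕ → V) :
    Prop where
  side_r : ∀ i < n + 2, side (r i) = side (r 0)
  side_c : ∀ j < n + 2, side (c j) = side (c 0)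
  strictMonoOn_r : StrictMonoOn (w ∘ r) (Set.Iio (n + 2))
  strictMonoOn_c : StrictMonoOn (w ∘ c) (Set.Iio (n + 2))
  adj_iff : ∀ i < n + 2, ∀ j < n + 2, G.Adj (r i) (c j) ↔ i + 1 = j ∨ j + 1 = i ∨ i + j = 0
  agree_r : ∀ i < n, ∀ z, w (c (i + 2)) < w z → (G.Adj (r i) z ↔ G.Adj (r (i + 1)) z)
  agree_c : ∀ j < n, ∀ z, w (r (j + 2)) < w z → (G.Adj (c j) z ↔ G.Adj (c (j + 1)) z)

lemma IsLadder.swap (hL : IsLadder G side w n r c) : IsLadder G side w n c r where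
  side_r := hL.side_c
  side_c := hL.side_r
  strictMonoOn_r := hL.strictMonoOn_c
  strictMonoOn_c := hL.strictMonoOn_r
  adj_iff i hi j hj := by rw [G.adj_comm, hL.adj_iff j hj i hi]; omega
  agree_r := hL.agree_c
  agree_c := hL.agree_r

lemma IsLadder.strictMonoOn_update_r (hL : IsLadder G side w n r c) {u : V}
    (hwu : w (r (n + 1)) < w u) :
    StrictMonoOn (w ∘ Function.update r (n + 2) u) (Set.Iio (n + 3)) := by
  rw [Function.comp_update]
  exact strictMonoOn_update_Iio hL.strictMonoOn_r hwu

lemma IsLadder.side_update_r (hbip : ∀ ⦃a b : V⦄, G.Adj a b → side a ≠ side b)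
    (hL : IsLadder G side w n r c) {u : V} (hu : G.Adj (c (n + 1)) u) :
    ∀ i < n + 3, side (Function.update r (n + 2) u i) = side (Function.update r (n + 2) u 0) := by
  intro i hi
  rw [Function.update_of_ne (by omega : 0 ≠ n + 2)]
  rcases (by omega : i < n + 2 ∨ i = n + 2) with hi | rfl
  · rw [Function.update_of_ne (by omega), hL.side_r i hi]
  · rw [Function.update_self, ← hL.side_r n (by omega)]
    exact side_eq_of_adj_of_adj hbip hu.symm
      ((hL.adj_iff n (by omega) (n + 1) (by omega)).2 (by omega))

lemma IsLadder.adj_update (hL : IsLadder G side w n r c) {u v : V}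
    (hu : G.Adj (c (n + 1)) u) (hu_old : ∀ j ≤ n, ¬ G.Adj (c j) u)
    (hv : G.Adj (r (n + 1)) v) (hv_old : ∀ i ≤ n, ¬ G.Adj (r i) v) :
    ∀ i < n + 3, ∀ j < n + 3,
      G.Adj (Function.update r (n + 2) u i) (Function.update c (n + 2) v j) ↔
        i + 1 = j ∨ j + 1 = i ∨ i + j = 0 ∨ (i = n + 2 ∧ j = n + 2 ∧ G.Adj u v) := by
  intro i hi j hj
  rcases (by omega : i < n + 2 ∨ i = n + 2) with hi | rfl <;>
    rcases (by omega : j < n + 2 ∨ j = n + 2) with hj | rfl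
  · rw [Function.update_of_ne (by omega), Function.update_of_ne (by omega), hL.adj_iff i hi j hj]
    omega
  · rw [Function.update_of_ne (by omega), Function.update_self]
    rcases (by omega : i ≤ n ∨ i = n + 1) with hi | rfl
    · exact iff_of_false (hv_old i hi) (by omega)
    · exact iff_of_true hv (by omega)
  · rw [Function.update_self, Function.update_of_ne (by omega), G.adj_comm]
    rcases (by omega : j ≤ n ∨ j = n + 1) with hj | rfl
    · exact iff_of_false (hu_old j hj) (by omega)
    · exact iff_of_true hu (by omega)
  · simp

lemma IsLadder.agree_update (hL : IsLadder G side w n r c) (u : V) {v : V}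
    (hv : ∀ z, w v < w z → (G.Adj (r n) z ↔ G.Adj (r (n + 1)) z)) :
    ∀ i < n + 1, ∀ z, w (Function.update c (n + 2) v (i + 2)) < w z →
      (G.Adj (Function.update r (n + 2) u i) z ↔
        G.Adj (Function.update r (n + 2) u (i + 1)) z) := by
  intro i hi z hz
  rw [Function.update_of_ne (by omega), Function.update_of_ne (by omega)]
  rcases (by omega : i < n ∨ i = n) with hi | rfl
  · rw [Function.update_of_ne (by omega)] at hz
    exact hL.agree_r i hi z hz
  · rw [Function.update_self] at hz
    exact hv z hz

variable [Fintype V] [DecidableRel G.Adj]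

lemma IsLadder.exists_next (hbip : ∀ ⦃a b : V⦄, G.Adj a b → side a ≠ side b)
    (hw : IsLexLabelling G w) (hL : IsLadder G side w n r c) :
    ∃ v, G.Adj (r (n + 1)) v ∧ (∀ i ≤ n, ¬ G.Adj (r i) v) ∧ w (c (n + 1)) < w v ∧
      ∀ z, w v < w z → (G.Adj (r n) z ↔ G.Adj (r (n + 1)) z) := by
  have hnadj : ¬ G.Adj (r n) (r (n + 1)) := fun h =>
    hbip h ((hL.side_r n (by omega)).trans (hL.side_r (n + 1) (by omega)).symm)
  obtain ⟨v, hv, hnv, hwv, hagree⟩ := hw.exists_max_adj_not_adj hnadj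
    (hL.strictMonoOn_r (by simp) (by simp) (by omega))
    ((hL.adj_iff n (by omega) (n + 1) (by omega)).2 (by omega))
    (by rw [hL.adj_iff (n + 1) (by omega) (n + 1) (by omega)]; omega)
  refine ⟨v, hv, fun i hi => ?_, hwv, hagree⟩
  induction hk : n - i generalizing i with
  | zero =>
    obtain rfl : i = n := by omega
    exact hnv
  | succ k ih =>
    have hwc : w (c (i + 2)) < w v :=
      (hL.strictMonoOn_c.monotoneOn (by simp; omega) (by simp) (by omega)).trans_lt hwv
    rw [hL.agree_r i (by omega) v hwc]
    exact ih (i + 1) (by omega) (by omega)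

lemma IsLadder.extend (hbip : ∀ ⦃a b : V⦄, G.Adj a b → side a ≠ side b)
    (hw : IsLexLabelling G w) (hG : ¬ HasLongInducedCycle G) (hL : IsLadder G side w n r c) :
    ∃ r' c', IsLadder G side w (n + 1) r' c' := by
  obtain ⟨v, hv, hv_old, hwv, hv_agree⟩ := hL.exists_next hbip hw
  obtain ⟨u, hu, hu_old, hwu, hu_agree⟩ := hL.swap.exists_next hbip hw
  have hadj := hL.adj_update hu hu_old hv hv_old
  by_cases huv : G.Adj u v
  · refine absurd (hasLongInducedCycle_of_closedLadder hbip (m := n + 3) (by omega)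
      (hL.strictMonoOn_update_r hwu).injOn.of_comp
      (hL.swap.strictMonoOn_update_r hwv).injOn.of_comp
      (hL.side_update_r hbip hu) (hL.swap.side_update_r hbip hv) fun i hi j hj => ?_) hG
    rw [hadj i hi j hj]
    simp only [huv, and_true]
    omega
  · exact ⟨_, _, hL.side_update_r hbip hu, hL.swap.side_update_r hbip hv,
      hL.strictMonoOn_update_r hwu, hL.swap.strictMonoOn_update_r hwv,
      fun i hi j hj => by simp [hadj i hi j hj, huv],
      hL.agree_update u hv_agree, hL.swap.agree_update v hu_agree⟩

theorem not_isLadder (hbip : ∀ ⦃a b : V⦄, G.Adj a b → side a ≠ side b)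
    (hw : IsLexLabelling G w) (hG : ¬ HasLongInducedCycle G) {n : ℕ} {r c : ℕ → V} :
    ¬ IsLadder G side w n r c := by
  intro hL
  have hgrow : ∀ k, ∃ r' c', IsLadder G side w (n + k) r' c' := by
    intro k
    induction k with
    | zero => exact ⟨r, c, hL⟩
    | succ k ih =>
      obtain ⟨r', c', h⟩ := ih
      exact h.extend hbip hw hG
  obtain ⟨r', c', h⟩ := hgrow (Fintype.card V)
  have := Finset.card_le_card_of_injOn r' (s := Finset.range (n + Fintype.card V + 2))
    (fun _ _ => Finset.mem_univ _) (by simpa using h.strictMonoOn_r.injOn.of_comp)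
  simp only [Finset.card_range, Finset.card_univ] at this
  omega

end Ladder

theorem exists_simplicialEdge {V : Type u} [Finite V] {G : SimpleGraph V} {side : V → Bool}
    (hbip : ∀ ⦃a b : V⦄, G.Adj a b → side a ≠ side b) (hG : ¬ HasLongInducedCycle G)
    (hedge : ∃ a b, G.Adj a b) : ∃ a b, SimplicialEdge G a b := by
  classical
  cases nonempty_fintype V
  obtain ⟨w, hw⟩ := exists_isLexLabelling G
  obtain ⟨a, ⟨b₀, hab₀⟩, ha⟩ := Set.exists_min_image {v | ∃ u, G.Adj v u} w (Set.toFinite _)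
    (hedge.imp fun a ⟨b, h⟩ => ⟨b, h⟩)
  obtain ⟨b, hab : G.Adj a b, hb⟩ :=
    Set.exists_min_image {u | G.Adj a u} w (Set.toFinite _) ⟨b₀, hab₀⟩
  refine ⟨a, b, hab, fun x ⟨hax, hxb⟩ y ⟨hby, hya⟩ => ?_⟩
  simp only [SimpleGraph.mem_neighborSet, Set.mem_singleton_iff] at hax hxb hby hya
  by_contra hxy
  -- a failure of simpliciality at the `w`-first edge is the first rung of a ladder
  refine not_isLadder hbip hw hG (n := 0) (r := fun i => if i = 0 then a else y)
    (c := fun j => if j = 0 then b else x) ⟨?_, ?_, ?_, ?_, ?_, ?_, ?_⟩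
  · intro i hi
    interval_cases i
    exacts [rfl, side_eq_of_adj_of_adj hbip hby.symm hab]
  · intro j hj
    interval_cases j
    exacts [rfl, side_eq_of_adj_of_adj hbip hax.symm hab.symm]
  · intro i hi j hj hij
    simp only [Set.mem_Iio] at hi hj
    obtain ⟨rfl, rfl⟩ : i = 0 ∧ j = 1 := by omega
    exact lt_of_le_of_ne (ha y ⟨b, hby.symm⟩) fun h => hya (hw.1 h).symm
  · intro i hi j hj hij
    simp only [Set.mem_Iio] at hi hj
    obtain ⟨rfl, rfl⟩ : i = 0 ∧ j = 1 := by omega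
    exact lt_of_le_of_ne (hb x hax) fun h => hxb (hw.1 h).symm
  · intro i hi j hj
    interval_cases i <;> interval_cases j <;> simp [hab, hax, hby.symm, G.adj_comm y x, hxy]
  · intro i hi; omega
  · intro j hj; omega

open SignedBigraph in
/-- every positive signed bigraph whose underlying bipartite graph
is chordal bipartite is a chordal signed bigraph. -/
theorem positiveChordalBigraph_isChordal
    {V : Type u} [Fintype V] (G : SignedBigraph V)
    (hpos : ∀ a b : V, G.Adj a b → G.sign a b = true)
    (hcb : ¬ HasLongInducedCycle G.graph) :
    G.IsChordal := by
  refine isChordal_of_forall_exists_signedSimplicial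
    (fun H => (∀ a b, H.Adj a b → H.sign a b = true) ∧ ¬ HasLongInducedCycle H.graph) ?_ G
    ⟨hpos, hcb⟩
  rintro H ⟨hHpos, hHcb⟩ hedge
  obtain ⟨a, b, hab⟩ := exists_simplicialEdge H.bipartite hHcb hedge
  exact ⟨a, b, signedSimplicial_of_simplicialEdge hHpos hab,
    fun x y hxy => hHpos x y (SimpleGraph.deleteEdges_adj.1 hxy).1,
    hab.not_hasLongInducedCycle_deleteEdges hHcb⟩
end
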